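/- arXiv:math/0608285 — 6 statements merged into one kernel-verified Lean document; each statement's English description precedes it below -/
import Mathlib

section
/- Expanding the rational function (z₁-z₂)(z₁-z₃)(z₂-z₃) / ((2z₁-z₂)(z₁+z₂-z₃)(2z₁-z₃)) as a Laurent series in the domain |z₁| ≪ |z₂| ≪ |z₃| yields a series with nonnegative coefficients. -/
/-!
Power series with nonnegative coefficients form a subsemiring, and it is closed under
`r ↦ (1 - r)⁻¹` when `r` has no constant term, because `(1 - r)⁻¹ = 1 + r (1 - r)⁻¹`
expresses every coefficient of the inverse through coefficients of strictly smaller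
multidegree. Each of the three factors has the shape `(1 - f) / (1 - f - g)` with `f`, `g`
monomials, and `(1 - f) / (1 - f - g) = 1 + g / (1 - f - g)` lies in that subsemiring.
-/

namespace MvPowerSeries

variable {σ R : Type*}

section Semiring

variable [CommSemiring R] [PartialOrder R] [IsOrderedRing R]

variable (σ R) in
def nonnegCoeffs : Subsemiring (MvPowerSeries σ R) where
  carrier := {f | ∀ d, 0 ≤ coeff d f}
  mul_mem' {f g} hf hg d := by
    classical
    rw [coeff_mul]
    exact Finset.sum_nonneg fun p _ => mul_nonneg (hf p.1) (hg p.2)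
  one_mem' d := by
    classical
    rw [coeff_one]
    split_ifs <;> simp
  add_mem' {f g} hf hg d := by
    rw [map_add]
    exact add_nonneg (hf d) (hg d)
  zero_mem' d := by simp

theorem mem_nonnegCoeffs {f : MvPowerSeries σ R} :
    f ∈ nonnegCoeffs σ R ↔ ∀ d, 0 ≤ coeff d f :=
  Iff.rfl

theorem X_mem_nonnegCoeffs (i : σ) : X i ∈ nonnegCoeffs σ R := fun d => by
  classical
  rw [coeff_X]
  split_ifs <;> simp

end Semiring

section Field

variable [Field R] [PartialOrder R] [IsOrderedRing R]

theorem inv_one_sub_mem_nonnegCoeffs {r : MvPowerSeries σ R} (hr0 : constantCoeff r = 0)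
    (hr : r ∈ nonnegCoeffs σ R) : (1 - r)⁻¹ ∈ nonnegCoeffs σ R := by
  have hrec : (1 - r)⁻¹ = 1 + r * (1 - r)⁻¹ := by
    linear_combination MvPowerSeries.mul_inv_cancel (1 - r) (by simp [hr0])
  classical
  intro d
  induction d using WellFoundedLT.induction with
  | ind d ih =>
    rw [hrec, map_add, coeff_mul]
    refine add_nonneg (mem_nonnegCoeffs.mp (one_mem _) d) (Finset.sum_nonneg fun p hp => ?_)
    rw [Finset.HasAntidiagonal.mem_antidiagonal] at hp
    rcases eq_or_ne p.1 0 with h0 | h0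
    · simp [h0, hr0]
    · have hlt : p.2 < d := by
        rw [← hp]
        exact lt_add_of_pos_left _ (pos_iff_ne_zero.mpr h0)
      exact mul_nonneg (hr p.1) (ih p.2 hlt)

theorem one_sub_mul_inv_one_sub_sub_mem_nonnegCoeffs {f g : MvPowerSeries σ R}
    (hf0 : constantCoeff f = 0) (hg0 : constantCoeff g = 0)
    (hf : f ∈ nonnegCoeffs σ R) (hg : g ∈ nonnegCoeffs σ R) :
    (1 - f) * (1 - f - g)⁻¹ ∈ nonnegCoeffs σ R := by
  have hsplit : (1 - f) * (1 - f - g)⁻¹ = 1 + g * (1 - (f + g))⁻¹ := by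
    rw [← sub_sub]
    linear_combination MvPowerSeries.mul_inv_cancel (1 - f - g) (by simp [hf0, hg0])
  rw [hsplit]
  exact add_mem (one_mem _) <| mul_mem hg <|
    inv_one_sub_mem_nonnegCoeffs (by simp [hf0, hg0]) (add_mem hf hg)

end Field

end MvPowerSeries

open MvPowerSeries

/-- With `a = z₁/z₂`, `b = z₂/z₃`, the rational function
`(z₁-z₂)(z₁-z₃)(z₂-z₃)/((2z₁-z₂)(z₁+z₂-z₃)(2z₁-z₃))` equals
`(1-a)/(1-2a) · (1-ab)/(1-2ab) · (1-b)/(1-b-ab)`, and its expansion as a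
formal power series in `a`, `b` (the expansion in the domain
`|z₁| ≪ |z₂| ≪ |z₃|`) has nonnegative coefficients. -/
theorem stmt_2 :
    ∀ d : Fin 2 →₀ ℕ,
      0 ≤ MvPowerSeries.coeff (R := ℝ) d
        (((1 - MvPowerSeries.X 0) * (1 - 2 * MvPowerSeries.X 0)⁻¹) *
          ((1 - MvPowerSeries.X 0 * MvPowerSeries.X 1) *
            (1 - 2 * (MvPowerSeries.X 0 * MvPowerSeries.X 1))⁻¹) *
          ((1 - MvPowerSeries.X 1) *
            (1 - MvPowerSeries.X 1 - MvPowerSeries.X 0 * MvPowerSeries.X 1)⁻¹)) := by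
  set a : MvPowerSeries (Fin 2) ℝ := X 0
  set ab : MvPowerSeries (Fin 2) ℝ := X 0 * X 1
  have ha : a ∈ nonnegCoeffs (Fin 2) ℝ := X_mem_nonnegCoeffs 0
  have hb : X 1 ∈ nonnegCoeffs (Fin 2) ℝ := X_mem_nonnegCoeffs 1
  have hab : ab ∈ nonnegCoeffs (Fin 2) ℝ := mul_mem ha hb
  have ha0 : constantCoeff a = 0 := constantCoeff_X 0
  have hab0 : constantCoeff ab = 0 := by simp [ab]
  rw [two_mul, two_mul, ← sub_sub, ← sub_sub, ← mem_nonnegCoeffs]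
  exact mul_mem (mul_mem
    (one_sub_mul_inv_one_sub_sub_mem_nonnegCoeffs ha0 ha0 ha ha)
    (one_sub_mul_inv_one_sub_sub_mem_nonnegCoeffs hab0 hab0 hab hab))
    (one_sub_mul_inv_one_sub_sub_mem_nonnegCoeffs (constantCoeff_X 1) hab0 hb hab)
end

section
/- Giambelli–Thom–Porteous formula via residues: for distinct complex numbers λ₁,...,λ_n and θ₁,...,θ_k with k ≥ n, the sum ∑_{i=1}^{n} ∏_{j=1}^{k}(θ_j - λ_i) / ∏_{s≠i}(λ_s - λ_i) equals the coefficient c_{k-n+1} in the power series expansion of ∏_{j=1}^{k}(1+θ_j q)/∏_{i=1}^{n}(1+λ_i q) = ∑_{m≥0} c_m q^m. -/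
/-!
Put `F = ∏ⱼ (X + θⱼ)` and `W = ∏ᵢ (X + λᵢ)`; the series `∏ⱼ (1 + θⱼ q) / ∏ᵢ (1 + λᵢ q)` is the
quotient of the reversals `q^k F(1/q)` and `q^n W(1/q)`. Divide `F = W G + R` with `deg R < n`.
The part coming from `G` is a polynomial of degree `≤ k - n`, and the reversal of `R` is divisible
by `q^(k-n+1)`, so the coefficient of `q^(k-n+1)` is the coefficient of `X^(n-1)` in `R`.
Lagrange interpolation at the roots `-λᵢ` of `W`, where `R` agrees with `F`, turns that leading
coefficient into the residue sum.
-/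

open Polynomial Finset Lagrange

namespace Polynomial

section Semiring

variable {R : Type*} [Semiring R]

theorem reflect_eq_reflect_mul_X_pow {p : R[X]} {m k : ℕ} (hp : p.natDegree ≤ m) (hmk : m ≤ k) :
    reflect k p = reflect m p * X ^ (k - m) := by
  have h := reflect_mul p 1 hp (natDegree_one.trans_le (Nat.zero_le (k - m)))
  rwa [mul_one, Nat.add_sub_cancel' hmk, reflect_one] at h

theorem coeff_reflect_eq_zero_of_natDegree_le {p : R[X]} {N i : ℕ} (hp : p.natDegree ≤ N)
    (hi : N < i) : (reflect N p).coeff i = 0 := by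
  rw [coeff_reflect, revAt_eq_self_of_lt hi]
  exact coeff_eq_zero_of_natDegree_lt (hp.trans_lt hi)

end Semiring

section CommRing

variable {R : Type*} [CommRing R] {ι : Type*}

theorem eval_modByMonic_eq_self_of_root {p q : R[X]} {x : R} (hx : q.eval x = 0) :
    (p %ₘ q).eval x = p.eval x :=
  eval₂_modByMonic_eq_self_of_root hx

theorem reflect_nodal [Nontrivial R] [DecidableEq ι] (s : Finset ι) (v : ι → R) :
    reflect #s (nodal s v) = ∏ i ∈ s, (1 - C (v i) * X) := by
  induction s using Finset.induction with
  | empty => simp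
  | @insert a s ha ih =>
    rw [nodal_insert_eq_nodal ha, prod_insert ha, card_insert_of_notMem ha, add_comm,
      reflect_mul _ _ (natDegree_X_sub_C_le _) natDegree_nodal.le, ih, reflect_sub,
      reflect_one_X, reflect_C, pow_one]

theorem coeff_reflect_mul_of_degree_lt {p : R[X]} {n k : ℕ} (hp : p.degree < n) (hnk : n ≤ k)
    {φ : PowerSeries R} (hφ : PowerSeries.constantCoeff φ = 1) :
    PowerSeries.coeff (k - n + 1) ((reflect k p : PowerSeries R) * φ) = p.coeff (n - 1) := by
  cases n with
  | zero =>
    obtain rfl : p = 0 := degree_eq_bot.mp (Nat.WithBot.lt_zero_iff.mp hp)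
    simp
  | succ m =>
    have hpm : p.natDegree ≤ m :=
      natDegree_le_of_degree_le (Order.le_of_lt_succ (by exact_mod_cast hp))
    rw [reflect_eq_reflect_mul_X_pow hpm (by omega), show k - (m + 1) + 1 = k - m by omega,
      coe_mul, coe_pow, coe_X, mul_right_comm, PowerSeries.coeff_mul_X_pow', if_pos le_rfl,
      Nat.sub_self, PowerSeries.coeff_zero_eq_constantCoeff_apply, map_mul, hφ, mul_one,
      constantCoeff_coe, coeff_reflect, revAt_zero, Nat.add_sub_cancel]

end CommRing

variable {K : Type*} [Field K]

theorem coeff_reflect_mul_inv_reflect {f w : K[X]} (hw : w.Monic) {n k : ℕ}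
    (hwn : w.natDegree = n) (hnk : n ≤ k) (hf : f.natDegree ≤ k) :
    PowerSeries.coeff (k - n + 1) ((reflect k f : PowerSeries K) * (reflect n w : PowerSeries K)⁻¹)
      = (f %ₘ w).coeff (n - 1) := by
  set W : PowerSeries K := ((reflect n w : K[X]) : PowerSeries K)
  have hW : PowerSeries.constantCoeff W = 1 := by
    rw [constantCoeff_coe, coeff_reflect, revAt_zero, ← hwn, hw.coeff_natDegree]
  have hgk : (f /ₘ w).natDegree ≤ k - n := by
    rw [natDegree_divByMonic f hw, hwn]; omega
  have hdiv : reflect k f = reflect n w * reflect (k - n) (f /ₘ w) + reflect k (f %ₘ w) := by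
    conv_lhs => rw [← modByMonic_add_div f w]
    rw [reflect_add, add_comm, ← reflect_mul _ _ hwn.le hgk, Nat.add_sub_cancel' hnk]
  have hquot : (reflect k f : PowerSeries K) * W⁻¹
      = reflect (k - n) (f /ₘ w) + reflect k (f %ₘ w) * W⁻¹ := by
    rw [hdiv, coe_add, coe_mul, add_mul, mul_comm (W : PowerSeries K), mul_assoc,
      PowerSeries.mul_inv_cancel W (by simp [hW]), mul_one]
  rw [hquot, map_add, coeff_coe, coeff_reflect_eq_zero_of_natDegree_le hgk (by omega), zero_add]
  refine coeff_reflect_mul_of_degree_lt ?_ hnk (by rw [PowerSeries.constantCoeff_inv, hW, inv_one])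
  exact (degree_modByMonic_lt f hw).trans_eq (by rw [degree_eq_natDegree hw.ne_zero, hwn])

end Polynomial

/-- Giambelli–Thom–Porteous via residues. For distinct
complex numbers `λ₁,…,λₙ`, numbers `θ₁,…,θ_k` with `k ≥ n`, the sum
`∑ᵢ ∏ⱼ(θⱼ - λᵢ) / ∏_{s≠i}(λ_s - λᵢ)` equals the coefficient `c_{k-n+1}` of
`q^{k-n+1}` in the power series `∏ⱼ(1+θⱼq)/∏ᵢ(1+λᵢq) = ∑ c_m q^m`. -/
theorem stmt_4 (n k : ℕ) (hnk : n ≤ k)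
    (lam : Fin n → ℂ) (hlam : Function.Injective lam) (θ : Fin k → ℂ) :
    (∑ i, (∏ j, (θ j - lam i)) / ∏ s ∈ Finset.univ.erase i, (lam s - lam i))
      = PowerSeries.coeff (R := ℂ) (k - n + 1)
          ((∏ j, (1 + PowerSeries.C (R := ℂ) (θ j) * PowerSeries.X)) *
            (∏ i, (1 + PowerSeries.C (R := ℂ) (lam i) * PowerSeries.X))⁻¹) := by
  have hreflect (m : ℕ) (c : Fin m → ℂ) : ∏ j, (1 + PowerSeries.C (c j) * PowerSeries.X)
      = ((reflect m (nodal univ (-c)) : ℂ[X]) : PowerSeries ℂ) := by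
    have h := reflect_nodal (univ : Finset (Fin m)) (-c)
    rw [card_univ, Fintype.card_fin] at h
    rw [h, ← coeToPowerSeries.ringHom_apply, map_prod]
    simp [coeToPowerSeries.ringHom_apply, sub_eq_add_neg]
  have hnodes : Set.InjOn (-lam) (univ : Finset (Fin n)) := (neg_injective.comp hlam).injOn
  have hcard : #(univ : Finset (Fin n)) = n := by simp
  rw [hreflect, hreflect, coeff_reflect_mul_inv_reflect nodal_monic (natDegree_nodal.trans hcard)
    hnk (natDegree_nodal.trans (card_fin k)).le]
  have hlagrange := coeff_eq_sum hnodes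
    ((degree_modByMonic_lt (nodal univ (-θ)) (nodal_monic (v := -lam))).trans_eq degree_nodal)
  rw [hcard] at hlagrange
  rw [hlagrange]
  refine sum_congr rfl fun i _ => ?_
  rw [eval_modByMonic_eq_self_of_root (eval_nodal_at_node (mem_univ i)), eval_nodal]
  simp only [Pi.neg_apply, neg_sub_neg]
end

section
/- The group Diff_d(1) of d-jets of holomorphic reparametrizations of (ℂ,0) with nonvanishing derivative, acting on d-jets of curves ℂ → ℂⁿ identified with n×d matrices, embeds as a subgroup of the group of invertible upper-triangular d×d matrices: the substitution α₁t + α₂t² + ... + α_d t^d (α₁ ≠ 0) corresponds to the upper-triangular matrix whose (i,j) entry is ∑_{τ ∈ Π[j], |τ|=i} perm(τ) α_τ, where the sum is over partitions τ of j with i parts, α_τ = ∏_{m∈τ} α_m, and perm(τ) is the number of distinct orderings of the parts of τ. In particular the diagonal entries are α₁, α₁², ..., α₁^d. -/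
/-!
With `α 0 = 0`, `substEntry α i j` is the coefficient of `t ^ j` in `A ^ i`, where
`A = ∑ α m t ^ m`: the matrix of a jet records the powers of the reparametrization. The
composed jet is the substitution `A ∘ B`, and substitution is a ring homomorphism, so
`(A ∘ B) ^ i = A ^ i ∘ B`; reading off the coefficient of `t ^ j` gives the matrix product.
The sum over `s` may be cut to `1 ≤ s ≤ d` because `A ^ i` starts in degree `i ≥ 1` and
`B ^ s` in degree `s > j` for `s > d`.
-/

/-- The `(i,j)` entry of the matrix associated to a reparametrization jet
`α₁ t + α₂ t² + …`: the sum over all ordered compositions of `j` into `i`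
positive parts of the product of the corresponding `α`'s.  This equals
`∑_{τ ∈ Π[j], |τ| = i} perm(τ) α_τ`, the sum over partitions `τ` of `j` with
`i` parts, where `perm(τ)` is the number of distinct orderings of `τ`. -/
noncomputable def substEntry (α : ℕ → ℂ) (i j : ℕ) : ℂ :=
  ∑ f ∈ Finset.univ.filter
      (fun f : Fin i → Fin (j + 1) =>
        (∀ m, 1 ≤ (f m : ℕ)) ∧ (∑ m, (f m : ℕ)) = j),
    ∏ m, α ((f m : ℕ))

open PowerSeries Finset

section
variable {R : Type*} [CommSemiring R]

theorem PowerSeries.coe_trunc_eq_sum_fin (n : ℕ) (f : R⟦X⟧) :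
    (trunc n f : R⟦X⟧) = ∑ k : Fin n, C (coeff (k : ℕ) f) * X ^ (k : ℕ) := by
  ext m
  simp only [Polynomial.coeff_coe, coeff_trunc, map_sum, coeff_C_mul_X_pow]
  rw [Fin.sum_univ_eq_sum_range (fun k => if m = k then coeff k f else 0), sum_ite_eq]
  simp

theorem PowerSeries.coeff_pow_eq_sum_fin (f : R⟦X⟧) (i j : ℕ) :
    coeff j (f ^ i) = ∑ g ∈ univ.filter (fun g : Fin i → Fin (j + 1) => ∑ m, (g m : ℕ) = j),
      ∏ m, coeff (g m : ℕ) f := by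
  -- Only coefficients of degree `≤ j` matter, so `f` may be replaced by its truncation.
  have hcoeff (φ : R⟦X⟧) : coeff j φ = (trunc (j + 1) φ).coeff j := by simp [coeff_trunc]
  rw [hcoeff, ← trunc_trunc_pow, ← hcoeff, coe_trunc_eq_sum_fin, ← Fin.prod_const,
    prod_univ_sum, map_sum, sum_filter]
  refine sum_congr rfl fun g _ => ?_
  rw [prod_mul_distrib, ← map_prod, prod_pow_eq_pow_sum, coeff_C_mul_X_pow]
  exact if_congr eq_comm rfl rfl

theorem PowerSeries.coeff_pow_eq_zero_of_lt {f : R⟦X⟧} (hf : constantCoeff f = 0)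
    {j s : ℕ} (h : j < s) : coeff j (f ^ s) = 0 :=
  X_pow_dvd_iff.mp (pow_dvd_pow_of_dvd (X_dvd_iff.mpr hf) s) j h

end

theorem PowerSeries.coeff_subst_eq_sum_of_support_subset {R : Type*} [CommRing R] {b f : R⟦X⟧}
    (hb : HasSubst b) (e : ℕ) {s : Finset ℕ}
    (hs : Function.support (fun d => coeff d f * coeff e (b ^ d)) ⊆ s) :
    coeff e (f.subst b) = ∑ d ∈ s, coeff d f * coeff e (b ^ d) := by
  rw [coeff_subst' hb]
  exact finsum_eq_sum_of_support_subset _ hs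

theorem card_le_sum_of_one_le {ι : Type*} [Fintype ι] {g : ι → ℕ} (h : ∀ m, 1 ≤ g m) :
    Fintype.card ι ≤ ∑ m, g m := by
  simpa using card_nsmul_le_sum univ g 1 fun m _ => h m

theorem eq_one_of_sum_eq_card {ι : Type*} [Fintype ι] {g : ι → ℕ} (h : ∀ m, 1 ≤ g m)
    (hsum : ∑ m, g m = Fintype.card ι) (m : ι) : g m = 1 :=
  ((sum_eq_sum_iff_of_le fun m _ => h m).mp (by simpa using hsum.symm) m (mem_univ m)).symm

theorem substEntry_eq_zero_of_lt (α : ℕ → ℂ) {i j : ℕ} (h : j < i) : substEntry α i j = 0 := by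
  refine sum_eq_zero fun g hg => absurd h (not_lt.mpr ?_)
  obtain ⟨hpos, hsum⟩ := (mem_filter.mp hg).2
  simpa [hsum] using card_le_sum_of_one_le hpos

theorem substEntry_self (α : ℕ → ℂ) (i : ℕ) : substEntry α i i = α 1 ^ i := by
  rcases i with _ | i
  · simp [substEntry]
  rw [substEntry, sum_eq_single_of_mem (fun _ => ⟨1, by omega⟩)]
  · simp
  · simp
  · intro g hg hne
    obtain ⟨hpos, hsum⟩ := (mem_filter.mp hg).2
    exact absurd (funext fun m => Fin.ext (eq_one_of_sum_eq_card hpos (by simpa using hsum) m)) hne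

theorem substEntry_eq_coeff_pow {α : ℕ → ℂ} (hα0 : α 0 = 0) (i j : ℕ) :
    substEntry α i j = coeff j (mk α ^ i) := by
  rw [substEntry, coeff_pow_eq_sum_fin]
  simp only [coeff_mk, and_comm (a := ∀ _, _), ← filter_filter]
  refine sum_filter_of_ne fun g _ hg m => Nat.one_le_iff_ne_zero.mpr fun h => hg ?_
  exact prod_eq_zero (mem_univ m) (by rw [h, hα0])

theorem mem_Icc_one_of_ne_zero {M : Type*} [Zero M] {α : ℕ → M} {d : ℕ} (hα0 : α 0 = 0)
    (hαd : ∀ m, d < m → α m = 0) {l : ℕ} (hl : α l ≠ 0) : l ∈ Icc 1 d := by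
  rw [mem_Icc]
  constructor
  · exact Nat.one_le_iff_ne_zero.mpr fun h => hl (h ▸ hα0)
  · exact not_lt.mp fun h => hl (hαd l h)

theorem substEntry_comp {d : ℕ} {α β : ℕ → ℂ} (hα0 : α 0 = 0) (hαd : ∀ m, d < m → α m = 0)
    (hβ0 : β 0 = 0) {i j : ℕ} (hi : 1 ≤ i) (hjd : j ≤ d) :
    substEntry (fun m => ∑ l ∈ Icc 1 d, α l * coeff m (mk β ^ l)) i j
      = ∑ s ∈ Icc 1 d, substEntry α i s * substEntry β s j := by
  have hαc : constantCoeff (mk α) = 0 := hα0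
  have hβc : constantCoeff (mk β) = 0 := hβ0
  have hB : HasSubst (mk β) := HasSubst.of_constantCoeff_zero' hβc
  have hγ0 : ∑ l ∈ Icc 1 d, α l * coeff 0 (mk β ^ l) = 0 :=
    sum_eq_zero fun l hl => by
      rw [coeff_pow_eq_zero_of_lt hβc (mem_Icc.mp hl).1, mul_zero]
  have hγ : mk (fun m => ∑ l ∈ Icc 1 d, α l * coeff m (mk β ^ l)) = (mk α).subst (mk β) := by
    ext m
    rw [coeff_mk, coeff_subst_eq_sum_of_support_subset hB m (s := Icc 1 d)]
    · simp only [coeff_mk]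
    · exact (Function.support_mul_subset_left _ _).trans fun l hl =>
        mem_Icc_one_of_ne_zero hα0 hαd (by simpa using hl)
  rw [substEntry_eq_coeff_pow hγ0, hγ, ← subst_pow hB, coeff_subst_eq_sum_of_support_subset hB j]
  · exact sum_congr rfl fun s _ => by
      rw [substEntry_eq_coeff_pow hα0, substEntry_eq_coeff_pow hβ0]
  · intro s hs
    obtain ⟨hαs, hβs⟩ := mul_ne_zero_iff.mp hs
    have his : i ≤ s := not_lt.mp fun h => hαs (coeff_pow_eq_zero_of_lt hαc h)
    have hsj : s ≤ j := not_lt.mp fun h => hβs (coeff_pow_eq_zero_of_lt hβc h)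
    exact mem_Icc.mpr ⟨hi.trans his, hsj.trans hjd⟩

theorem stmt_7_general (d : ℕ)
    (α β : ℕ → ℂ)
    (hα0 : α 0 = 0) (hαd : ∀ m, d < m → α m = 0)
    (hβ0 : β 0 = 0) :
    (∀ i j : ℕ, j < i → substEntry α i j = 0) ∧
    (∀ i : ℕ, substEntry α i i = (α 1) ^ i) ∧
    (∀ i j : ℕ, 1 ≤ i → i ≤ d → 1 ≤ j → j ≤ d →
      substEntry
        (fun m => ∑ l ∈ Finset.Icc 1 d,
          α l * PowerSeries.coeff m ((PowerSeries.mk β) ^ l)) i j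
      = ∑ s ∈ Finset.Icc 1 d, substEntry α i s * substEntry β s j) :=
  ⟨fun _ _ => substEntry_eq_zero_of_lt α, substEntry_self α,
    fun _ _ hi _ _ hjd => substEntry_comp hα0 hαd hβ0 hi hjd⟩

/-- The group `Diff_d(1)` of `d`-jets of reparametrizations
`α₁ t + … + α_d t^d` (`α₁ ≠ 0`), acting on `d`-jets of curves by
substitution, embeds into the invertible upper-triangular `d × d` matrices:
the associated matrix (with entries `substEntry α i j`, `1 ≤ i, j ≤ d`) is
upper-triangular with diagonal entries `α₁, α₁², …, α₁^d`, and the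
correspondence is a group homomorphism: the matrix of the composed jet
`α ∘ β` (substitution of `β` into `α`, truncated at degree `d`) is the
product of the matrices of `α` and `β`. -/
theorem stmt_7 (d : ℕ) (hd : 1 ≤ d)
    (α β : ℕ → ℂ)
    (hα0 : α 0 = 0) (hαd : ∀ m, d < m → α m = 0) (hα1 : α 1 ≠ 0)
    (hβ0 : β 0 = 0) (hβd : ∀ m, d < m → β m = 0) (hβ1 : β 1 ≠ 0) :
    (∀ i j : ℕ, j < i → substEntry α i j = 0) ∧
    (∀ i : ℕ, substEntry α i i = (α 1) ^ i) ∧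
    (∀ i j : ℕ, 1 ≤ i → i ≤ d → 1 ≤ j → j ≤ d →
      substEntry
        (fun m => ∑ l ∈ Finset.Icc 1 d,
          α l * PowerSeries.coeff m ((PowerSeries.mk β) ^ l)) i j
      = ∑ s ∈ Finset.Icc 1 d, substEntry α i s * substEntry β s j) :=
  stmt_7_general d α β hα0 hαd hβ0
end

section
/- Fix d ≥ 1 and n ≥ d, and let γ be a regular d-jet of a curve in ℂⁿ (i.e. with nonzero linear coefficient v₁). The set Sol_γ of d-jets of maps Ψ: (ℂⁿ,0)→(ℂᵏ,0) satisfying Ψ∘γ = 0 is a linear subspace of codimension d·k in the space J_d(n,k) of all such map-jets. -/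
/-- The space `J_d(n,k)`-component: polynomials in `n` variables of total
degree at most `d` and with zero constant term (the jet `Ψ` is a `k`-tuple of
such polynomials). -/
noncomputable def jetSpace (n d : ℕ) : Submodule ℂ (MvPolynomial (Fin n) ℂ) :=
  (MvPolynomial.restrictTotalDegree (Fin n) ℂ d) ⊓
    LinearMap.ker ((MvPolynomial.aeval (fun _ : Fin n => (0 : ℂ))).toLinearMap)

namespace Stmt9Aux

open Polynomial in
lemma pq (n d : ℕ) (hd : 1 ≤ d) (v : ℕ → Fin n → ℂ) (i0 : Fin n) :
    (∑ m' ∈ Finset.Icc 1 d, C (v m' i0) * X ^ m') =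
      X * (∑ m' ∈ Finset.Icc 1 d, C (v m' i0) * X ^ (m' - 1)) := by
  rw [Finset.mul_sum]
  refine Finset.sum_congr rfl fun m' hm' => ?_
  obtain ⟨h1, _⟩ := Finset.mem_Icc.mp hm'
  rw [show m' = (m' - 1) + 1 from (Nat.sub_add_cancel h1).symm, Nat.add_sub_cancel, pow_succ]
  ring

open Polynomial in
lemma qc0 (n d : ℕ) (hd : 1 ≤ d) (v : ℕ → Fin n → ℂ) (i0 : Fin n) :
    (∑ m' ∈ Finset.Icc 1 d, C (v m' i0) * X ^ (m' - 1) : ℂ[X]).coeff 0 = v 1 i0 := by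
  rw [finset_sum_coeff]
  rw [Finset.sum_eq_single 1]
  · simp
  · intro b hb hb1
    obtain ⟨h1, _⟩ := Finset.mem_Icc.mp hb
    simp only [coeff_X_pow, coeff_C_mul]
    rw [if_neg (by omega)]; ring
  · intro h
    exact absurd (Finset.mem_Icc.mpr ⟨le_refl 1, hd⟩) h

open Polynomial in
lemma pow_coeff_lt (n d : ℕ) (hd : 1 ≤ d) (v : ℕ → Fin n → ℂ) (i0 : Fin n) (s t : ℕ)
    (h : t < s) :
    ((∑ m' ∈ Finset.Icc 1 d, C (v m' i0) * X ^ m' : ℂ[X]) ^ s).coeff t = 0 := by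
  rw [pq n d hd v i0, mul_pow, mul_comm, coeff_mul_X_pow']
  simp [Nat.not_le.mpr h]

open Polynomial in
lemma pow_coeff_eq (n d : ℕ) (hd : 1 ≤ d) (v : ℕ → Fin n → ℂ) (i0 : Fin n) (s : ℕ) :
    ((∑ m' ∈ Finset.Icc 1 d, C (v m' i0) * X ^ m' : ℂ[X]) ^ s).coeff s = (v 1 i0) ^ s := by
  rw [pq n d hd v i0, mul_pow, mul_comm, coeff_mul_X_pow']
  simp only [le_refl, if_true, Nat.sub_self]
  rw [coeff_zero_eq_eval_zero, eval_pow, ← coeff_zero_eq_eval_zero, qc0 n d hd v i0]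

/-- The curve jet as an `n`-tuple of polynomials in `t`. -/
noncomputable def gam (n d : ℕ) (v : ℕ → Fin n → ℂ) : Fin n → Polynomial ℂ :=
  fun i => ∑ m' ∈ Finset.Icc 1 d, Polynomial.C (v m' i) * Polynomial.X ^ m'

/-- The coefficient-extraction linear map on one component. -/
noncomputable def phi (n d : ℕ) (v : ℕ → Fin n → ℂ) : jetSpace n d →ₗ[ℂ] (Fin d → ℂ) :=
  LinearMap.pi fun m => (Polynomial.lcoeff ℂ (m.1 + 1)).comp
    ((MvPolynomial.aeval (gam n d v)).toLinearMap.comp (jetSpace n d).subtype)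

lemma phi_apply (n d : ℕ) (v : ℕ → Fin n → ℂ) (P : jetSpace n d) (m : Fin d) :
    phi n d v P m =
      (MvPolynomial.aeval (gam n d v) (P : MvPolynomial (Fin n) ℂ)).coeff (m.1 + 1) := rfl

lemma mem_jetSpace {n d : ℕ} {p : MvPolynomial (Fin n) ℂ} :
    p ∈ jetSpace n d ↔ p.totalDegree ≤ d ∧
      MvPolynomial.aeval (fun _ : Fin n => (0 : ℂ)) p = 0 := by
  simp [jetSpace, Submodule.mem_inf, MvPolynomial.mem_restrictTotalDegree]

lemma Xpow_mem (n d : ℕ) (i0 : Fin n) (s : ℕ) (hs1 : 1 ≤ s) (hsd : s ≤ d) :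
    (MvPolynomial.X i0 ^ s : MvPolynomial (Fin n) ℂ) ∈ jetSpace n d := by
  refine mem_jetSpace.mpr ⟨?_, ?_⟩
  · simpa [MvPolynomial.totalDegree_X_pow] using hsd
  · simp [map_pow, MvPolynomial.aeval_X, zero_pow (by omega : s ≠ 0)]

lemma phi_Xpow (n d : ℕ) (hd : 1 ≤ d) (v : ℕ → Fin n → ℂ) (i0 : Fin n)
    (s : ℕ) (hs1 : 1 ≤ s) (hsd : s ≤ d) (m : Fin d) :
    phi n d v ⟨_, Xpow_mem n d i0 s hs1 hsd⟩ m =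
      ((∑ m' ∈ Finset.Icc 1 d, Polynomial.C (v m' i0) * Polynomial.X ^ m' : Polynomial ℂ) ^ s).coeff
        (m.1 + 1) := by
  rw [phi_apply]
  simp [map_pow, MvPolynomial.aeval_X, gam]

lemma single_mem (n d : ℕ) (hd : 1 ≤ d) (v : ℕ → Fin n → ℂ) (i0 : Fin n)
    (hvi : v 1 i0 ≠ 0) :
    ∀ r : ℕ, ∀ m : Fin d, d - m.1 ≤ r →
      Pi.single m (1 : ℂ) ∈ LinearMap.range (phi n d v) := by
  intro r
  induction r with
  | zero => intro m hm; exact absurd hm (by omega)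
  | succ r ih =>
    intro m hm
    set s := m.1 + 1 with hs
    have hs1 : 1 ≤ s := by omega
    have hsd : s ≤ d := by omega
    set P : jetSpace n d := ⟨_, Xpow_mem n d i0 s hs1 hsd⟩ with hP
    set e : Fin d → ℂ := phi n d v P with he
    have he_lt : ∀ m' : Fin d, m'.1 < m.1 → e m' = 0 := by
      intro m' hm'
      rw [he, phi_Xpow n d hd v i0 s hs1 hsd m']
      exact pow_coeff_lt n d hd v i0 s (m'.1 + 1) (by omega)
    have he_eq : e m = (v 1 i0) ^ s := by
      rw [he, phi_Xpow n d hd v i0 s hs1 hsd m]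
      exact pow_coeff_eq n d hd v i0 s
    have ha0 : e m ≠ 0 := by rw [he_eq]; exact pow_ne_zero _ hvi
    have key : Pi.single m (1 : ℂ) =
        (e m)⁻¹ • e - ∑ m' ∈ Finset.univ.filter (fun m' : Fin d => m.1 < m'.1),
          ((e m)⁻¹ * e m') • (Pi.single m' (1 : ℂ) : Fin d → ℂ) := by
      funext t
      simp only [Pi.sub_apply, Pi.smul_apply, smul_eq_mul, Finset.sum_apply]
      rcases lt_trichotomy t.1 m.1 with h | h | h
      · rw [Pi.single_eq_of_ne (by intro hc; omega) 1, he_lt t h]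
        rw [Finset.sum_eq_zero]
        · ring
        · intro m' hm'
          have : m.1 < m'.1 := (Finset.mem_filter.mp hm').2
          rw [Pi.single_eq_of_ne (by intro hc; rw [hc] at h; omega) 1]
          ring
      · have ht : t = m := Fin.ext h
        subst ht
        rw [Pi.single_eq_same, Finset.sum_eq_zero]
        · field_simp; simp
        · intro m' hm'
          have : t.1 < m'.1 := (Finset.mem_filter.mp hm').2
          rw [Pi.single_eq_of_ne (by intro hc; rw [hc] at this; omega) 1]
          ring
      · rw [Pi.single_eq_of_ne (by intro hc; omega) 1]
        rw [Finset.sum_eq_single t]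
        · rw [Pi.single_eq_same]; ring
        · intro m' hm' hne
          rw [Pi.single_eq_of_ne (fun hc => hne hc.symm) 1]; ring
        · intro hnt
          exact absurd (Finset.mem_filter.mpr ⟨Finset.mem_univ t, h⟩) hnt
    rw [key]
    refine Submodule.sub_mem _ ?_ ?_
    · exact Submodule.smul_mem _ _ ⟨P, rfl⟩
    · refine Submodule.sum_mem _ fun m' hm' => Submodule.smul_mem _ _ ?_
      have hlt : m.1 < m'.1 := (Finset.mem_filter.mp hm').2
      exact ih m' (by omega)

lemma phi_surjective (n d : ℕ) (hd : 1 ≤ d) (v : ℕ → Fin n → ℂ) (i0 : Fin n)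
    (hvi : v 1 i0 ≠ 0) : Function.Surjective (phi n d v) := by
  rw [← LinearMap.range_eq_top]
  rw [eq_top_iff]
  intro c _
  have : c = ∑ m : Fin d, c m • (Pi.single m (1 : ℂ) : Fin d → ℂ) := by
    funext t
    simp [Finset.sum_apply, Pi.single_apply]
  rw [this]
  exact Submodule.sum_mem _ fun m _ =>
    Submodule.smul_mem _ _ (single_mem n d hd v i0 hvi d m (by omega))

end Stmt9Aux

/-- Fix `d ≥ 1`, `n ≥ d`, and a regular `d`-jet of a curve
`γ(t) = ∑_{m=1}^{d} t^m v_m` in `ℂⁿ` (so `v₁ ≠ 0`).  The set of map-jets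
`Ψ = (P₁,…,P_k) ∈ J_d(n,k)` with `Ψ ∘ γ = 0` (all coefficients of
`t, …, t^d` of each `Pⱼ(γ(t))` vanish) is a linear subspace of codimension
`d·k` in `J_d(n,k)`. -/
theorem stmt_9 (n k d : ℕ) (hd : 1 ≤ d) (hdn : d ≤ n)
    (v : ℕ → Fin n → ℂ) (hv : v 1 ≠ 0) :
    ∃ S : Submodule ℂ (Fin k → ↥(jetSpace n d)),
      (S : Set (Fin k → ↥(jetSpace n d))) =
        {Ψ | ∀ j : Fin k, ∀ m ∈ Finset.Icc 1 d,
          (MvPolynomial.aeval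
              (fun i : Fin n =>
                ∑ m' ∈ Finset.Icc 1 d, Polynomial.C (v m' i) * Polynomial.X ^ m')
              ((Ψ j : MvPolynomial (Fin n) ℂ))).coeff m = 0} ∧
      Module.finrank ℂ ↥S + d * k =
        Module.finrank ℂ (Fin k → ↥(jetSpace n d)) := by
  classical
  obtain ⟨i0, hvi⟩ := Function.ne_iff.mp hv
  -- the full linear map
  set L : (Fin k → jetSpace n d) →ₗ[ℂ] (Fin k → Fin d → ℂ) :=
    LinearMap.pi (fun j => (Stmt9Aux.phi n d v).comp (LinearMap.proj j)) with hL
  refine ⟨LinearMap.ker L, ?_, ?_⟩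
  · ext Ψ
    simp only [SetLike.mem_coe, LinearMap.mem_ker, Set.mem_setOf_eq, hL, funext_iff,
      LinearMap.pi_apply, LinearMap.comp_apply, LinearMap.proj_apply, Pi.zero_apply]
    constructor
    · intro h j m hm
      obtain ⟨h1, h2⟩ := Finset.mem_Icc.mp hm
      have := h j ⟨m - 1, by omega⟩
      rw [Stmt9Aux.phi_apply] at this
      unfold Stmt9Aux.gam at this
      simpa [Nat.sub_add_cancel h1] using this
    · intro h j
      intro m
      rw [Stmt9Aux.phi_apply]
      exact h j (m.1 + 1) (Finset.mem_Icc.mpr ⟨by omega, by omega⟩)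
  · have hFD : FiniteDimensional ℂ (jetSpace n d) :=
      Submodule.finiteDimensional_of_le (inf_le_left)
    have hsurj : Function.Surjective L := by
      intro c
      choose P hP using fun j => Stmt9Aux.phi_surjective n d hd v i0 hvi (c j)
      exact ⟨P, funext fun j => hP j⟩
    have hrn := LinearMap.finrank_range_add_finrank_ker L
    rw [LinearMap.range_eq_top.mpr hsurj, finrank_top] at hrn
    have hcod : Module.finrank ℂ (Fin k → Fin d → ℂ) = k * d := by
      simp [Module.finrank_pi, Module.finrank_pi_fintype]
    rw [hcod] at hrn
    rw [mul_comm d k]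
    omega
end

section
/- Let Ψ ∈ J_d(n,k) be a map-jet whose linear part has one-dimensional kernel, and suppose γ, γ' are regular d-jets of curves in ℂⁿ with Ψ∘γ = 0 and Ψ∘γ' = 0. Then there exists a d-jet of reparametrization δ ∈ Diff_d(1) with γ' = γ∘δ. -/
/-!
Regularity and `Ψ ∘ γ = 0` put `γ₁` into `ker (Lin Ψ)`, which is then the line spanned by `γ₁`.
The reparametrization `p` is built degree by degree: if `γ' ≡ γ ∘ p` modulo `t ^ m`, a
first-order Taylor expansion of `Ψ` along `γ ∘ p` shows that the degree-`m` discrepancy of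
`γ' - γ ∘ p` lies in `ker (Lin Ψ)`, so it equals `c • γ₁`, and replacing `p` by `p + c t ^ m`
removes it.
-/

open Finset Polynomial

namespace MvPolynomial

variable {R S σ : Type*} [CommRing R] [CommRing S] [Algebra R S]

theorem aeval_sub_algebraMap_constantCoeff_mem {I : Ideal S} {g : σ → S} (hg : ∀ i, g i ∈ I)
    (P : MvPolynomial σ R) : aeval g P - algebraMap R S (constantCoeff P) ∈ I := by
  have hg0 : (fun i => Ideal.Quotient.mkₐ R I (g i)) = 0 := by
    ext i; exact Ideal.Quotient.eq_zero_iff_mem.mpr (hg i)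
  rw [← Ideal.Quotient.eq, ← Ideal.Quotient.mkₐ_eq_mk R, comp_aeval_apply, hg0, aeval_zero,
    AlgHom.commutes]

theorem coeff_single_one_mul_X [DecidableEq σ] (P : MvPolynomial σ R) (i j : σ) :
    coeff (Finsupp.single i 1) (P * X j) = if i = j then constantCoeff P else 0 := by
  split_ifs with h
  · subst h
    simpa [constantCoeff_eq] using coeff_mul_X 0 i P
  · rw [coeff_mul_X', if_neg]
    simpa [Finsupp.support_single] using Ne.symm h

theorem aeval_add_sub_aeval_sub_sum_smul_mem [Fintype σ] {I : Ideal S} {m : ℕ} (hm : 1 ≤ m)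
    {g h : σ → S} (hg : ∀ i, g i ∈ I) (hh : ∀ i, h i ∈ I ^ m) (P : MvPolynomial σ R) :
    aeval (g + h) P - aeval g P - ∑ i, coeff (Finsupp.single i 1) P • h i ∈ I ^ (m + 1) := by
  classical
  have hhI : ∀ i, h i ∈ I := fun i => Ideal.pow_le_self (by omega) (hh i)
  induction P using MvPolynomial.induction_on with
  | C a =>
    simp [coeff_C, (Finsupp.single_ne_zero.mpr one_ne_zero).symm]
  | add P Q hP hQ =>
    convert add_mem hP hQ using 1
    simp only [map_add, coeff_add, add_smul, sum_add_distrib]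
    abel
  | mul_X P j hP =>
    set L := ∑ i, coeff (Finsupp.single i 1) P • h i
    have hL : L ∈ I ^ m := sum_mem fun i _ => Submodule.smul_of_tower_mem _ _ (hh i)
    have hB := aeval_sub_algebraMap_constantCoeff_mem hg P
    have key : aeval (g + h) P * (g + h) j - aeval g P * g j - constantCoeff P • h j =
        (aeval (g + h) P - aeval g P - L) * (g + h) j + L * (g + h) j
          + (aeval g P - algebraMap R S (constantCoeff P)) * h j := by
      rw [Algebra.smul_def, Pi.add_apply]; ring
    simp only [map_mul, aeval_X, coeff_single_one_mul_X, ite_smul, zero_smul, sum_ite_eq',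
      mem_univ, if_true, key]
    refine add_mem (add_mem (Ideal.mul_mem_right _ _ hP) ?_) ?_
    · rw [pow_succ]
      exact Ideal.mul_mem_mul hL (add_mem (hg j) (hhI j))
    · rw [pow_succ']
      exact Ideal.mul_mem_mul hB (hh j)

end MvPolynomial

namespace Polynomial

variable {R S σ : Type*} [CommRing R] [CommRing S] [Algebra R S]

theorem aeval_toMvPolynomial (i : σ) (x : σ → S) (f : R[X]) :
    MvPolynomial.aeval x (f.toMvPolynomial i) = aeval (x i) f := by
  rw [toMvPolynomial, ← aeval_algHom_apply, MvPolynomial.aeval_X]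

theorem coeff_single_toMvPolynomial (i : σ) (n : ℕ) (f : R[X]) :
    MvPolynomial.coeff (Finsupp.single i n) (f.toMvPolynomial i) = f.coeff n := by
  induction f using Polynomial.induction_on' with
  | add f g hf hg => simp [hf, hg]
  | monomial k a =>
    classical
    rw [toMvPolynomial, aeval_monomial, MvPolynomial.algebraMap_eq, MvPolynomial.X_pow_eq_monomial,
      MvPolynomial.C_mul_monomial, mul_one, MvPolynomial.coeff_monomial, coeff_monomial]
    simp [(Finsupp.single_injective i).eq_iff]

theorem aeval_add_sub_aeval_sub_smul_mem {I : Ideal S} {m : ℕ} (hm : 1 ≤ m) {g h : S}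
    (hg : g ∈ I) (hh : h ∈ I ^ m) (f : R[X]) :
    aeval (g + h) f - aeval g f - f.coeff 1 • h ∈ I ^ (m + 1) := by
  simpa [aeval_toMvPolynomial, coeff_single_toMvPolynomial] using
    MvPolynomial.aeval_add_sub_aeval_sub_sum_smul_mem (σ := Unit) hm (g := fun _ => g)
      (h := fun _ => h) (fun _ => hg) (fun _ => hh) (f.toMvPolynomial ())

theorem X_pow_dvd_comp {p q : R[X]} {N : ℕ} (hq : X ∣ q) (hp : X ^ N ∣ p) : X ^ N ∣ p.comp q := by
  obtain ⟨r, rfl⟩ := hp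
  rw [mul_comp, X_pow_comp]
  exact Dvd.dvd.mul_right (pow_dvd_pow_of_dvd hq N) _

theorem coeff_pow_eq_zero_of_X_dvd {p : R[X]} (hp : X ∣ p) {e l : ℕ} (hl : l < e) :
    (p ^ e).coeff l = 0 :=
  X_pow_dvd_iff.mp (pow_dvd_pow_of_dvd hp e) l hl

theorem X_pow_succ_dvd_sub_C_coeff_mul {p : R[X]} {m : ℕ} (hp : X ^ m ∣ p) :
    X ^ (m + 1) ∣ p - C (p.coeff m) * X ^ m := by
  rw [X_pow_dvd_iff] at hp ⊢
  intro l hl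
  rw [coeff_sub, coeff_C_mul_X_pow]
  rcases (Nat.lt_succ_iff.mp hl).lt_or_eq with hl | rfl
  · simp [hp l hl, hl.ne]
  · simp

theorem X_pow_dvd_iff_mem_span_X_pow {p : R[X]} {m : ℕ} :
    X ^ m ∣ p ↔ p ∈ Ideal.span {X} ^ m := by
  rw [Ideal.span_singleton_pow, Ideal.mem_span_singleton]

end Polynomial

section CurveJet

variable {R ι κ : Type*} [CommRing R] {d : ℕ}

/-- The curve jet `t ↦ ∑_{m=1}^{d} γ m t ^ m`, one polynomial per coordinate `i`. -/
noncomputable def curveJet (d : ℕ) (γ : ℕ → ι → R) (i : ι) : R[X] :=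
  ∑ m ∈ Icc 1 d, C (γ m i) * X ^ m

def IsJetRoot (d : ℕ) (Ψ : κ → MvPolynomial ι R) (γ : ℕ → ι → R) : Prop :=
  ∀ j, ∀ m ∈ Icc 1 d, (MvPolynomial.aeval (curveJet d γ) (Ψ j)).coeff m = 0

noncomputable def linearPart [Fintype ι] (P : MvPolynomial ι R) (w : ι → R) : R :=
  ∑ i, MvPolynomial.coeff (Finsupp.single i 1) P * w i

theorem X_dvd_curveJet (d : ℕ) (γ : ℕ → ι → R) (i : ι) : X ∣ curveJet d γ i :=
  dvd_sum fun m hm => dvd_mul_of_dvd_right (dvd_pow_self X (by grind)) _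

theorem coeff_curveJet (γ : ℕ → ι → R) (i : ι) {l : ℕ} (hl : l ∈ Icc 1 d) :
    (curveJet d γ i).coeff l = γ l i := by
  simp [curveJet, finsetSum_coeff, hl]

theorem coeff_curveJet_comp (γ : ℕ → ι → R) (i : ι) (p : R[X]) (l : ℕ) :
    ((curveJet d γ i).comp p).coeff l = ∑ e ∈ Icc 1 d, γ e i * (p ^ e).coeff l := by
  simp [curveJet, Polynomial.sum_comp, finsetSum_coeff, coeff_C_mul]

theorem curveJet_comp_zero (γ : ℕ → ι → R) (i : ι) : (curveJet d γ i).comp 0 = 0 := by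
  rw [comp_zero, ← coeff_zero_eq_eval_zero, X_dvd_iff.mp (X_dvd_curveJet d γ i), C_0]

theorem eq_sum_coeff_pow_smul_of_X_pow_dvd {γ γ' : ℕ → ι → R} {p : R[X]}
    (hp : ∀ i, X ^ (d + 1) ∣ curveJet d γ' i - (curveJet d γ i).comp p) {m : ℕ}
    (hm : m ∈ Icc 1 d) : γ' m = ∑ e ∈ Icc 1 d, (p ^ e).coeff m • γ e := by
  ext i
  have := X_pow_dvd_iff.mp (hp i) m (by grind)
  rw [coeff_sub, sub_eq_zero, coeff_curveJet γ' i hm, coeff_curveJet_comp] at this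
  simp [this, mul_comm]

theorem IsJetRoot.X_pow_dvd_aeval {Ψ : κ → MvPolynomial ι R} {γ : ℕ → ι → R}
    (hγ : IsJetRoot d Ψ γ) (hΨ0 : ∀ j, MvPolynomial.coeff 0 (Ψ j) = 0) (j : κ) :
    X ^ (d + 1) ∣ MvPolynomial.aeval (curveJet d γ) (Ψ j) := by
  rw [X_pow_dvd_iff]
  intro l hl
  rcases Nat.eq_zero_or_pos l with rfl | hl0
  · have := MvPolynomial.aeval_sub_algebraMap_constantCoeff_mem (I := Ideal.span {X})
      (fun i => Ideal.mem_span_singleton.mpr (X_dvd_curveJet d γ i)) (Ψ j)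
    rwa [Ideal.mem_span_singleton, MvPolynomial.constantCoeff_eq, hΨ0, map_zero, sub_zero,
      X_dvd_iff] at this
  · exact hγ j l (mem_Icc.mpr ⟨hl0, by omega⟩)

variable [Fintype ι] {Ψ : κ → MvPolynomial ι R} {γ γ' : ℕ → ι → R}

theorem IsJetRoot.linearPart_coeff_sub_comp_eq_zero (hΨ0 : ∀ j, MvPolynomial.coeff 0 (Ψ j) = 0)
    (hγ : IsJetRoot d Ψ γ) (hγ' : IsJetRoot d Ψ γ') {p : R[X]} (hp : X ∣ p) {m : ℕ}
    (hm : m ∈ Icc 1 d) (hagree : ∀ i, X ^ m ∣ curveJet d γ' i - (curveJet d γ i).comp p)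
    (j : κ) :
    linearPart (Ψ j) (fun i => (curveJet d γ' i - (curveJet d γ i).comp p).coeff m) = 0 := by
  let g : ι → R[X] := fun i => (curveJet d γ i).comp p
  let h : ι → R[X] := fun i => curveJet d γ' i - g i
  have hg : ∀ i, g i ∈ Ideal.span {X} := fun i => Ideal.mem_span_singleton.mpr <| by
    simpa using X_pow_dvd_comp (N := 1) hp (by simpa using X_dvd_curveJet d γ i)
  have htaylor := MvPolynomial.aeval_add_sub_aeval_sub_sum_smul_mem (mem_Icc.mp hm).1 hg
    (h := h) (fun i => X_pow_dvd_iff_mem_span_X_pow.mp (hagree i)) (Ψ j)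
  have hgh : g + h = curveJet d γ' := by ext1 i; simp [h]
  have hcomp : MvPolynomial.aeval g (Ψ j) = (MvPolynomial.aeval (curveJet d γ) (Ψ j)).comp p := by
    rw [comp_eq_aeval, MvPolynomial.comp_aeval_apply]; rfl
  rw [← X_pow_dvd_iff_mem_span_X_pow, X_pow_dvd_iff, hgh, hcomp] at htaylor
  have := htaylor m (Nat.lt_succ_self m)
  rw [coeff_sub, coeff_sub, hγ' j m hm,
    X_pow_dvd_iff.mp (X_pow_dvd_comp hp (hγ.X_pow_dvd_aeval hΨ0 j)) m (by grind),
    finsetSum_coeff] at this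
  simpa [linearPart, h, g] using this

theorem exists_comp_X_pow_succ_dvd (hd : 1 ≤ d) (hΨ0 : ∀ j, MvPolynomial.coeff 0 (Ψ j) = 0)
    (hγ : IsJetRoot d Ψ γ) (hγ' : IsJetRoot d Ψ γ')
    (hker : ∀ w, (∀ j, linearPart (Ψ j) w = 0) → ∃ c : R, w = c • γ 1)
    {p : R[X]} (hp : X ∣ p) (hpd : p.natDegree ≤ d) {m : ℕ} (hm : m ∈ Icc 1 d)
    (hagree : ∀ i, X ^ m ∣ curveJet d γ' i - (curveJet d γ i).comp p) :
    ∃ q : R[X], X ∣ q ∧ q.natDegree ≤ d ∧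
      ∀ i, X ^ (m + 1) ∣ curveJet d γ' i - (curveJet d γ i).comp q := by
  obtain ⟨hm1, hmd⟩ := mem_Icc.mp hm
  obtain ⟨c, hc⟩ := hker _ (hγ.linearPart_coeff_sub_comp_eq_zero hΨ0 hγ' hp hm hagree)
  have hXm : X ∣ (C c * X ^ m : R[X]) := dvd_mul_of_dvd_right (dvd_pow_self X (by omega)) _
  -- shifting `p` by `c X ^ m` shifts `γ ∘ p` by `c γ₁ X ^ m` modulo `X ^ (m + 1)`
  refine ⟨p + C c * X ^ m, dvd_add hp hXm,
    (natDegree_add_le _ _).trans (max_le hpd ((natDegree_C_mul_X_pow_le c m).trans hmd)),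
    fun i => ?_⟩
  have hlin := X_pow_succ_dvd_sub_C_coeff_mul (hagree i)
  have htaylor := aeval_add_sub_aeval_sub_smul_mem hm1 (Ideal.mem_span_singleton.mpr hp)
    (X_pow_dvd_iff_mem_span_X_pow.mp (dvd_mul_left (X ^ m) (C c))) (curveJet d γ i)
  rw [← X_pow_dvd_iff_mem_span_X_pow, coeff_curveJet γ i (mem_Icc.mpr ⟨le_rfl, hd⟩)] at htaylor
  rw [congr_fun hc i] at hlin
  convert dvd_sub hlin htaylor using 1
  simp only [comp_eq_aeval, Pi.smul_apply, smul_eq_mul, smul_eq_C_mul, C_mul]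
  ring

theorem IsJetRoot.linearPart_one_eq_zero (hd : 1 ≤ d)
    (hΨ0 : ∀ j, MvPolynomial.coeff 0 (Ψ j) = 0) (hγ : IsJetRoot d Ψ γ) (j : κ) :
    linearPart (Ψ j) (γ 1) = 0 := by
  have h1 : 1 ∈ Icc 1 d := mem_Icc.mpr ⟨le_rfl, hd⟩
  simpa [curveJet_comp_zero, coeff_curveJet γ _ h1] using
    hγ.linearPart_coeff_sub_comp_eq_zero hΨ0 hγ (dvd_zero X) h1
      (fun i => by simpa only [curveJet_comp_zero, sub_zero, pow_one] using X_dvd_curveJet d γ i) j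

theorem exists_comp_X_pow_dvd (hd : 1 ≤ d) (hΨ0 : ∀ j, MvPolynomial.coeff 0 (Ψ j) = 0)
    (hγ : IsJetRoot d Ψ γ) (hγ' : IsJetRoot d Ψ γ')
    (hker : ∀ w, (∀ j, linearPart (Ψ j) w = 0) → ∃ c : R, w = c • γ 1) :
    ∃ p : R[X], X ∣ p ∧ p.natDegree ≤ d ∧
      ∀ i, X ^ (d + 1) ∣ curveJet d γ' i - (curveJet d γ i).comp p := by
  suffices ∀ m, 1 ≤ m → m ≤ d + 1 → ∃ p : R[X], X ∣ p ∧ p.natDegree ≤ d ∧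
      ∀ i, X ^ m ∣ curveJet d γ' i - (curveJet d γ i).comp p from this (d + 1) (by omega) le_rfl
  intro m hm
  induction m, hm using Nat.le_induction with
  | base =>
    exact fun _ => ⟨0, dvd_zero X, by simp,
      fun i => by simpa only [curveJet_comp_zero, sub_zero, pow_one] using X_dvd_curveJet d γ' i⟩
  | succ m hm ih =>
    intro hmd
    obtain ⟨p, hp, hpd, hagree⟩ := ih (by omega)
    exact exists_comp_X_pow_succ_dvd hd hΨ0 hγ hγ' hker hp hpd (mem_Icc.mpr ⟨hm, by omega⟩) hagree

end CurveJet

theorem stmt_10_general (n k d : ℕ) (hd : 1 ≤ d)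
    (Ψ : Fin k → MvPolynomial (Fin n) ℂ)
    (hconst : ∀ j, MvPolynomial.coeff 0 (Ψ j) = 0)
    (hker : ∃ w₀ : Fin n → ℂ, w₀ ≠ 0 ∧
      {w : Fin n → ℂ |
          ∀ j, (∑ i, MvPolynomial.coeff (Finsupp.single i 1) (Ψ j) * w i) = 0}
        = {w : Fin n → ℂ | ∃ a : ℂ, w = a • w₀})
    (γ γ' : ℕ → Fin n → ℂ)
    (hγ1 : γ 1 ≠ 0) (hγ'1 : γ' 1 ≠ 0)
    (hsol : ∀ j, ∀ m ∈ Finset.Icc 1 d,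
      (MvPolynomial.aeval
          (fun i : Fin n =>
            ∑ m' ∈ Finset.Icc 1 d, Polynomial.C (γ m' i) * Polynomial.X ^ m')
          (Ψ j)).coeff m = 0)
    (hsol' : ∀ j, ∀ m ∈ Finset.Icc 1 d,
      (MvPolynomial.aeval
          (fun i : Fin n =>
            ∑ m' ∈ Finset.Icc 1 d, Polynomial.C (γ' m' i) * Polynomial.X ^ m')
          (Ψ j)).coeff m = 0) :
    ∃ δ : ℕ → ℂ, δ 0 = 0 ∧ δ 1 ≠ 0 ∧ (∀ m, d < m → δ m = 0) ∧
      ∀ m ∈ Finset.Icc 1 d,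
        γ' m = ∑ i ∈ Finset.Icc 1 d,
          (PowerSeries.coeff m ((PowerSeries.mk δ) ^ i)) • γ i := by
  obtain ⟨w₀, -, hker⟩ := hker
  have hroot : IsJetRoot d Ψ γ := hsol
  have hroot' : IsJetRoot d Ψ γ' := hsol'
  have hmem : ∀ w, (∀ j, linearPart (Ψ j) w = 0) → ∃ a : ℂ, w = a • w₀ :=
    fun w => (Set.ext_iff.mp hker w).mp
  obtain ⟨a, ha⟩ := hmem _ (hroot.linearPart_one_eq_zero hd hconst)
  have ha0 : a ≠ 0 := by rintro rfl; exact hγ1 (by simpa using ha)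
  have hker' : ∀ w, (∀ j, linearPart (Ψ j) w = 0) → ∃ c : ℂ, w = c • γ 1 := fun w hw => by
    obtain ⟨b, rfl⟩ := hmem w hw
    exact ⟨b / a, by rw [ha, smul_smul, div_mul_cancel₀ b ha0]⟩
  obtain ⟨p, hp, hpd, hagree⟩ := exists_comp_X_pow_dvd hd hconst hroot hroot' hker'
  have hrep := fun m (hm : m ∈ Icc 1 d) => eq_sum_coeff_pow_smul_of_X_pow_dvd hagree hm
  have hmk : PowerSeries.mk p.coeff = p := by ext; simp
  refine ⟨p.coeff, X_dvd_iff.mp hp, fun h1 => hγ'1 ?_,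
    fun m hm => coeff_eq_zero_of_natDegree_lt (by omega),
    fun m hm => by simpa [hmk, ← Polynomial.coe_pow] using hrep m hm⟩
  rw [hrep 1 (mem_Icc.mpr ⟨le_rfl, hd⟩), sum_eq_zero]
  intro e he
  rcases (mem_Icc.mp he).1.eq_or_lt with rfl | he2
  · simp [h1]
  · rw [coeff_pow_eq_zero_of_X_dvd hp he2, zero_smul]

/-- Let `Ψ = (P₁,…,P_k) ∈ J_d(n,k)` be a map-jet (each `Pⱼ`
of total degree `≤ d` with zero constant term) whose linear part has a
one-dimensional kernel, and let `γ, γ'` be regular `d`-jets of curves in `ℂⁿ`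
with `Ψ ∘ γ = 0` and `Ψ ∘ γ' = 0` (truncated at degree `d`).  Then there is a
`d`-jet of reparametrization `δ ∈ Diff_d(1)` with `γ' = γ ∘ δ`. -/
theorem stmt_10 (n k d : ℕ) (hd : 1 ≤ d)
    (Ψ : Fin k → MvPolynomial (Fin n) ℂ)
    (hdeg : ∀ j, (Ψ j).totalDegree ≤ d)
    (hconst : ∀ j, MvPolynomial.coeff 0 (Ψ j) = 0)
    (hker : ∃ w₀ : Fin n → ℂ, w₀ ≠ 0 ∧
      {w : Fin n → ℂ |
          ∀ j, (∑ i, MvPolynomial.coeff (Finsupp.single i 1) (Ψ j) * w i) = 0}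
        = {w : Fin n → ℂ | ∃ a : ℂ, w = a • w₀})
    (γ γ' : ℕ → Fin n → ℂ)
    (hγ0 : γ 0 = 0) (hγ'0 : γ' 0 = 0)
    (hγ1 : γ 1 ≠ 0) (hγ'1 : γ' 1 ≠ 0)
    (hγd : ∀ m, d < m → γ m = 0) (hγ'd : ∀ m, d < m → γ' m = 0)
    (hsol : ∀ j, ∀ m ∈ Finset.Icc 1 d,
      (MvPolynomial.aeval
          (fun i : Fin n =>
            ∑ m' ∈ Finset.Icc 1 d, Polynomial.C (γ m' i) * Polynomial.X ^ m')
          (Ψ j)).coeff m = 0)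
    (hsol' : ∀ j, ∀ m ∈ Finset.Icc 1 d,
      (MvPolynomial.aeval
          (fun i : Fin n =>
            ∑ m' ∈ Finset.Icc 1 d, Polynomial.C (γ' m' i) * Polynomial.X ^ m')
          (Ψ j)).coeff m = 0) :
    ∃ δ : ℕ → ℂ, δ 0 = 0 ∧ δ 1 ≠ 0 ∧ (∀ m, d < m → δ m = 0) ∧
      ∀ m ∈ Finset.Icc 1 d,
        γ' m = ∑ i ∈ Finset.Icc 1 d,
          (PowerSeries.coeff m ((PowerSeries.mk δ) ^ i)) • γ i :=
  stmt_10_general n k d hd Ψ hconst hker γ γ' hγ1 hγ'1 hsol hsol'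
end

section
/- Let q(z₁,...,z_d) be a product of nonzero affine-linear forms L₁⋯L_N and p(z₁,...,z_d) a polynomial. If for some index l, the degree of p in the variable z_l is at least by two smaller than the number of factors L_i involving z_l, and moreover every factor L_i with nonzero coefficient of z_l has zero coefficients of z_{l+1},...,z_d, then the iterated residue at infinity Res_{z₁=∞}...Res_{z_d=∞} p(z)dz/q(z) vanishes. -/
open Complex Set MeasureTheory Function Filter Metric
open scoped Real

lemma circle_decay_zero {f : ℂ → ℂ} {r0 R M : ℝ} (hr0 : 0 < r0) (hR : r0 ≤ R)
    (hd : ∀ z : ℂ, r0 ≤ ‖z‖ → DifferentiableAt ℂ f z)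
    (hb : ∀ z : ℂ, r0 ≤ ‖z‖ → ‖f z‖ ≤ M / ‖z‖ ^ 2) :
    (∮ z in C((0:ℂ), R), f z) = 0 := by
  have hR0 : 0 < R := hr0.trans_le hR
  have key : ∀ ρ : ℝ, R ≤ ρ → ‖∮ z in C((0:ℂ), R), f z‖ ≤ 2 * π * M / ρ := by
    intro ρ hρ
    have hρ0 : 0 < ρ := hR0.trans_le hρ
    have heq : (∮ z in C((0:ℂ), ρ), f z) = ∮ z in C((0:ℂ), R), f z := by
      apply circleIntegral_eq_of_differentiable_on_annulus_off_countable hR0 hρ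
        Set.countable_empty
      · intro z hz
        refine ((hd z ?_).continuousAt).continuousWithinAt
        have := hz.2
        simp only [Metric.mem_ball, Complex.dist_eq, sub_zero, not_lt] at this
        exact hR.trans this
      · intro z hz
        refine hd z ?_
        have := hz.1.2
        simp only [Metric.mem_closedBall, Complex.dist_eq, sub_zero, not_le] at this
        exact hR.trans this.le
    rw [← heq]
    have hbnd : ∀ z ∈ Metric.sphere (0:ℂ) ρ, ‖f z‖ ≤ M / ρ ^ 2 := by
      intro z hz
      simp only [mem_sphere_iff_norm, sub_zero] at hz
      have h1 : r0 ≤ ‖z‖ := by rw [hz]; exact hR.trans hρ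
      have := hb z h1
      rwa [hz] at this
    have := circleIntegral.norm_integral_le_of_norm_le_const (R := ρ) (C := M / ρ ^ 2)
      hρ0.le hbnd
    refine this.trans (le_of_eq ?_)
    field_simp
  have hlim : Tendsto (fun ρ : ℝ => 2 * π * M / ρ) atTop (nhds 0) :=
    Tendsto.div_atTop tendsto_const_nhds tendsto_id
  have : ‖∮ z in C((0:ℂ), R), f z‖ ≤ 0 :=
    ge_of_tendsto hlim (eventually_atTop.2 ⟨R, fun ρ hρ => key ρ hρ⟩)
  simpa using norm_le_zero_iff.mp this

lemma insertNth_update {n : ℕ} (i : Fin (n + 1)) (l' : Fin n) (x x' : ℂ) (y : Fin n → ℂ) :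
    i.insertNth x (Function.update y l' x') =
      Function.update (i.insertNth x y : Fin (n+1) → ℂ) (i.succAbove l') x' := by
  funext m
  by_cases hm : m = i
  · subst hm
    rw [Fin.insertNth_apply_same, Function.update_of_ne (Fin.succAbove_ne m l').symm,
      Fin.insertNth_apply_same]
  · obtain ⟨k, rfl⟩ := Fin.exists_succAbove_eq hm
    rw [Fin.insertNth_apply_succAbove]
    simp [Function.update_apply, Fin.insertNth_apply_succAbove, Fin.succAbove_right_inj]

lemma torus_vanish : ∀ (n : ℕ) (f : (Fin n → ℂ) → ℂ) (c : Fin n → ℂ) (R : Fin n → ℝ)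
    (l : Fin n),
    (∀ m, 0 < R m) →
    (∀ z : Fin n → ℂ, (∀ m, ‖z m - c m‖ = R m) → ContinuousAt f z) →
    (∀ y : Fin n → ℂ, (∀ m, m ≠ l → ‖y m - c m‖ ≤ R m) →
      (∮ x in C(c l, R l), f (Function.update y l x)) = 0) →
    torusIntegral f c R = 0 := by
  intro n
  induction n with
  | zero => exact fun f c R l => l.elim0
  | succ n ih =>
    intro f c R l hR hcont hcirc
    have htm : ∀ (θ : Fin (n+1) → ℝ) (m : Fin (n+1)), ‖torusMap c R θ m - c m‖ = R m := by
      intro θ m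
      simp only [torusMap, add_sub_cancel_left, norm_mul, Complex.norm_real,
        Real.norm_eq_abs, abs_of_pos (hR m)]
      rw [Complex.norm_exp_ofReal_mul_I, mul_one]
    have htmc : Continuous (torusMap c R) := by
      refine continuous_pi fun m => continuous_const.add (Continuous.mul continuous_const ?_)
      exact Complex.continuous_exp.comp
        ((Complex.continuous_ofReal.comp (continuous_apply m)).mul continuous_const)
    have hfc : Continuous fun θ : Fin (n+1) → ℝ => f (torusMap c R θ) := by
      rw [continuous_iff_continuousAt]
      intro θ
      exact (hcont _ (htm θ)).comp htmc.continuousAt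
    have hfi : TorusIntegrable f c R :=
      hfc.continuousOn.integrableOn_compact isCompact_Icc
    rcases Nat.eq_zero_or_pos n with hn | hn
    · subst hn
      have hl : l = 0 := Fin.eq_zero l
      subst hl
      rw [torusIntegral_dim1]
      have h0 : ∀ z : ℂ, (fun _ : Fin 1 => z) = Function.update c 0 z := by
        intro z; funext m; rw [Fin.eq_zero m, Function.update_self]
      calc (∮ z in C(c 0, R 0), f fun _ => z)
          = ∮ z in C(c 0, R 0), f (Function.update c 0 z) := by simp only [h0]
        _ = 0 := hcirc c (fun m hm => absurd (Fin.eq_zero m) hm)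
    · have : Nontrivial (Fin (n+1)) := Fin.nontrivial_iff_two_le.mpr (by omega)
      obtain ⟨i, hi⟩ := exists_ne l
      obtain ⟨l', hl'⟩ := Fin.exists_succAbove_eq (Ne.symm hi)
      rw [torusIntegral_succAbove hfi i]
      have hzero : ∀ x : ℂ, ‖x - c i‖ = R i →
          (∯ y in T(c ∘ i.succAbove, R ∘ i.succAbove), f (i.insertNth x y)) = 0 := by
        intro x hx
        refine ih _ _ _ l' (fun k => hR _) ?_ ?_
        · intro y hy
          have hins : ∀ m, ‖(i.insertNth x y : Fin (n+1) → ℂ) m - c m‖ = R m := by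
            intro m
            by_cases hm : m = i
            · subst hm; rwa [Fin.insertNth_apply_same]
            · obtain ⟨k, rfl⟩ := Fin.exists_succAbove_eq hm
              rw [Fin.insertNth_apply_succAbove]; exact hy k
          exact ContinuousAt.comp (hcont _ hins)
            (continuousAt_const.finInsertNth i continuousAt_id)
        · intro y hy
          have hcond : ∀ m, m ≠ l → ‖(i.insertNth x y : Fin (n+1) → ℂ) m - c m‖ ≤ R m := by
            intro m hm
            by_cases hmi : m = i
            · subst hmi; rw [Fin.insertNth_apply_same]; exact le_of_eq hx
            · obtain ⟨k, rfl⟩ := Fin.exists_succAbove_eq hmi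
              rw [Fin.insertNth_apply_succAbove]
              exact hy k (fun hk => hm (by rw [← hl', hk]))
          have key := hcirc (i.insertNth x y) hcond
          have hfun : (fun x' : ℂ => f (i.insertNth x (Function.update y l' x'))) =
              fun x' : ℂ =>
                f (Function.update (i.insertNth x y : Fin (n+1) → ℂ) l x') := by
            funext x'; rw [insertNth_update, hl']
          calc (∮ x' in C((c ∘ i.succAbove) l', (R ∘ i.succAbove) l'),
                  f (i.insertNth x (Function.update y l' x')))
              = ∮ x' in C(c l, R l),
                  f (Function.update (i.insertNth x y : Fin (n+1) → ℂ) l x') := by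
                rw [hfun]; simp only [comp_apply, hl']
            _ = 0 := key
      rw [circleIntegral]
      have hpt : ∀ θ : ℝ,
          (∯ y in T(c ∘ i.succAbove, R ∘ i.succAbove),
            f (i.insertNth (circleMap (c i) (R i) θ) y)) = 0 := by
        intro θ
        refine hzero _ ?_
        simp [circleMap, abs_of_pos (hR i), Complex.norm_exp_ofReal_mul_I]
      simp only [hpt, smul_zero, intervalIntegral.integral_zero]

set_option maxHeartbeats 1000000 in
/-- vanishing criterion for iterated residues.  Let
`q(z) = L₁ ⋯ L_N` be a product of nonzero affine-linear forms
`Lᵢ(z) = cstᵢ + ∑ₘ aᵢₘ zₘ` on `ℂ^d` and `p` a polynomial.  Suppose that for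
some index `l`, the degree of `p` in `z_l` is at least two smaller than the
number of factors `Lᵢ` involving `z_l`, and every factor with a nonzero
coefficient of `z_l` has zero coefficients of `z_{l+1}, …, z_d`.  Then the
iterated residue at infinity `Res_{z₁=∞} … Res_{z_d=∞} p(z)dz/q(z)` — the
integral over any torus `{|zₘ| = Rₘ}` with `1 ≪ R₁ ≪ … ≪ R_d` — vanishes. -/
theorem stmt_18 (d N : ℕ) (p : MvPolynomial (Fin d) ℂ)
    (a : Fin N → Fin d → ℂ) (cst : Fin N → ℂ)
    (hL : ∀ i, cst i ≠ 0 ∨ ∃ m, a i m ≠ 0)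
    (l : Fin d)
    (hdeg : p.degreeOf l + 2 ≤
      (Finset.univ.filter (fun i : Fin N => a i l ≠ 0)).card)
    (hlead : ∀ i : Fin N, a i l ≠ 0 → ∀ m : Fin d, l < m → a i m = 0) :
    ∃ C : ℝ, 1 ≤ C ∧ ∀ R : Fin d → ℝ,
      (∀ m : Fin d, C < R m) →
      (∀ m m' : Fin d, m < m' → C * R m < R m') →
      torusIntegral
        (fun z : Fin d → ℂ =>
          MvPolynomial.eval z p / ∏ i, (cst i + ∑ m, a i m * z m))
        0 R = 0 := by
  classical
  set T : ℝ := ∑ i, (‖cst i‖ + ∑ m, ‖a i m‖) with hT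
  have hT0 : 0 ≤ T := Finset.sum_nonneg fun i _ => by positivity
  have hTi : ∀ i, ‖cst i‖ + ∑ m, ‖a i m‖ ≤ T :=
    fun i => Finset.single_le_sum (f := fun i => ‖cst i‖ + ∑ m, ‖a i m‖)
      (fun j _ => by positivity) (Finset.mem_univ i)
  set C : ℝ := 2 + ∑ i, ∑ m, (if a i m = 0 then 0 else 4 * (T + 1) / ‖a i m‖) with hC
  have hsum0 : (0:ℝ) ≤ ∑ i, ∑ m, (if a i m = 0 then 0 else 4 * (T + 1) / ‖a i m‖) := by
    refine Finset.sum_nonneg fun i _ => Finset.sum_nonneg fun m _ => ?_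
    split <;> positivity
  have hC2 : (2:ℝ) ≤ C := by rw [hC]; linarith
  have hC1 : (1:ℝ) ≤ C := by linarith
  have hC0 : (0:ℝ) < C := by linarith
  have hCa : ∀ i m, a i m ≠ 0 → 4 * (T + 1) / ‖a i m‖ ≤ C := by
    intro i m him
    have h1 : (if a i m = 0 then (0:ℝ) else 4 * (T + 1) / ‖a i m‖) ≤
        ∑ m', (if a i m' = 0 then 0 else 4 * (T + 1) / ‖a i m'‖) :=
      Finset.single_le_sum
        (f := fun m' => if a i m' = 0 then (0:ℝ) else 4 * (T + 1) / ‖a i m'‖)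
        (fun m' _ => by split <;> positivity) (Finset.mem_univ m)
    have h2 : ∑ m', (if a i m' = 0 then (0:ℝ) else 4 * (T + 1) / ‖a i m'‖) ≤
        ∑ i', ∑ m', (if a i' m' = 0 then (0:ℝ) else 4 * (T + 1) / ‖a i' m'‖) :=
      Finset.single_le_sum
        (f := fun i' => ∑ m', (if a i' m' = 0 then (0:ℝ) else 4 * (T + 1) / ‖a i' m'‖))
        (fun i' _ => Finset.sum_nonneg fun m' _ => by split <;> positivity)
        (Finset.mem_univ i)
    rw [if_neg him] at h1
    rw [hC]; linarith
  refine ⟨C, hC1, ?_⟩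
  intro R hR1 hR2
  have hR0 : ∀ m, 0 < R m := fun m => hC0.trans (hR1 m)
  -- bound on the "constant part" of a factor whose top variable is m0
  have hkey : ∀ (i : Fin N) (m0 : Fin d) (y : Fin d → ℂ), a i m0 ≠ 0 →
      (∀ m, a i m ≠ 0 → m ≤ m0) →
      (∀ m, m < m0 → ‖y m‖ ≤ R m) →
      ‖cst i + ∑ m ∈ Finset.univ.erase m0, a i m * y m‖ ≤ ‖a i m0‖ * R m0 / 4 := by
    intro i m0 y ham0 hmax hyb
    have ha0 : (0:ℝ) < ‖a i m0‖ := norm_pos_iff.mpr ham0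
    have hRC1 : (1:ℝ) ≤ R m0 / C := by
      rw [le_div_iff₀ hC0]; nlinarith [hR1 m0]
    have h1 : ‖cst i + ∑ m ∈ Finset.univ.erase m0, a i m * y m‖ ≤
        ‖cst i‖ + ∑ m ∈ Finset.univ.erase m0, ‖a i m‖ * ‖y m‖ := by
      refine (norm_add_le _ _).trans (add_le_add_right ((norm_sum_le _ _).trans (le_of_eq ?_)) _)
      exact Finset.sum_congr rfl fun m _ => norm_mul _ _
    have h2 : ∀ m ∈ Finset.univ.erase m0, ‖a i m‖ * ‖y m‖ ≤ ‖a i m‖ * (R m0 / C) := by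
      intro m hm
      by_cases hz : a i m = 0
      · simp [hz]
      · have hmlt : m < m0 := lt_of_le_of_ne (hmax m hz) (Finset.ne_of_mem_erase hm)
        refine mul_le_mul_of_nonneg_left ((hyb m hmlt).trans ?_) (norm_nonneg _)
        rw [le_div_iff₀ hC0]
        nlinarith [hR2 m m0 hmlt, hR0 m]
    have h3 : ∑ m ∈ Finset.univ.erase m0, ‖a i m‖ * ‖y m‖ ≤
        (∑ m ∈ Finset.univ.erase m0, ‖a i m‖) * (R m0 / C) := by
      rw [Finset.sum_mul]
      exact Finset.sum_le_sum h2
    have h4 : ‖cst i‖ + ∑ m ∈ Finset.univ.erase m0, ‖a i m‖ ≤ T + 1 := by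
      have : ∑ m ∈ Finset.univ.erase m0, ‖a i m‖ ≤ ∑ m, ‖a i m‖ :=
        Finset.sum_le_sum_of_subset_of_nonneg (Finset.erase_subset _ _)
          (fun m _ _ => norm_nonneg _)
      have := hTi i
      linarith
    have h5 : ‖cst i‖ + ∑ m ∈ Finset.univ.erase m0, ‖a i m‖ * ‖y m‖ ≤
        (T + 1) * (R m0 / C) := by
      have hcst : ‖cst i‖ ≤ ‖cst i‖ * (R m0 / C) :=
        le_mul_of_one_le_right (norm_nonneg _) hRC1
      calc ‖cst i‖ + ∑ m ∈ Finset.univ.erase m0, ‖a i m‖ * ‖y m‖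
          ≤ ‖cst i‖ * (R m0 / C) + (∑ m ∈ Finset.univ.erase m0, ‖a i m‖) * (R m0 / C) := by
            exact add_le_add hcst h3
        _ = (‖cst i‖ + ∑ m ∈ Finset.univ.erase m0, ‖a i m‖) * (R m0 / C) := by ring
        _ ≤ (T + 1) * (R m0 / C) := by
            refine mul_le_mul_of_nonneg_right h4 (by positivity)
    have h6 : (T + 1) * (R m0 / C) ≤ ‖a i m0‖ * R m0 / 4 := by
      have hca := hCa i m0 ham0
      rw [div_le_iff₀ ha0] at hca
      have heq : (T + 1) * (R m0 / C) = (T + 1) * R m0 / C := by ring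
      rw [heq, div_le_div_iff₀ hC0 (by norm_num : (0:ℝ) < 4)]
      nlinarith [hR0 m0]
    calc ‖cst i + ∑ m ∈ Finset.univ.erase m0, a i m * y m‖
        ≤ ‖cst i‖ + ∑ m ∈ Finset.univ.erase m0, ‖a i m‖ * ‖y m‖ := h1
      _ ≤ (T + 1) * (R m0 / C) := h5
      _ ≤ ‖a i m0‖ * R m0 / 4 := h6
  -- every factor is nonzero on the torus
  have hne : ∀ z : Fin d → ℂ, (∀ m, ‖z m‖ = R m) → ∀ i,
      cst i + ∑ m, a i m * z m ≠ 0 := by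
    intro z hz i
    by_cases hex : ∃ m, a i m ≠ 0
    · set s := Finset.univ.filter (fun m => a i m ≠ 0) with hs
      have hsne : s.Nonempty := by
        obtain ⟨m, hm⟩ := hex
        exact ⟨m, Finset.mem_filter.mpr ⟨Finset.mem_univ _, hm⟩⟩
      set m0 := s.max' hsne with hm0
      have ham0 : a i m0 ≠ 0 := (Finset.mem_filter.mp (s.max'_mem hsne)).2
      have hmax : ∀ m, a i m ≠ 0 → m ≤ m0 := fun m hm =>
        s.le_max' m (Finset.mem_filter.mpr ⟨Finset.mem_univ _, hm⟩)
      have hsplit : cst i + ∑ m, a i m * z m =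
          (cst i + ∑ m ∈ Finset.univ.erase m0, a i m * z m) + a i m0 * z m0 := by
        rw [← Finset.add_sum_erase _ _ (Finset.mem_univ m0)]
        ring
      rw [hsplit]
      intro hcontra
      have h7 : ‖a i m0 * z m0‖ = ‖a i m0‖ * R m0 := by
        rw [norm_mul, hz m0]
      have h8 : ‖cst i + ∑ m ∈ Finset.univ.erase m0, a i m * z m‖ ≤
          ‖a i m0‖ * R m0 / 4 :=
        hkey i m0 z ham0 hmax (fun m _ => (hz m).le)
      have h9 : a i m0 * z m0 = -(cst i + ∑ m ∈ Finset.univ.erase m0, a i m * z m) := by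
        linear_combination hcontra
      rw [h9, norm_neg] at h7
      have ha0 : (0:ℝ) < ‖a i m0‖ := norm_pos_iff.mpr ham0
      nlinarith [hR0 m0]
    · push_neg at hex
      have : ∑ m, a i m * z m = 0 := Finset.sum_eq_zero fun m _ => by rw [hex m, zero_mul]
      rw [this, add_zero]
      rcases hL i with h | h
      · exact h
      · obtain ⟨m, hm⟩ := h; exact absurd (hex m) hm
  refine torus_vanish d _ 0 R l hR0 ?_ ?_
  · -- continuity on the torus
    intro z hz
    have hz' : ∀ m, ‖z m‖ = R m := by
      intro m; have := hz m; simpa using this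
    refine ContinuousAt.div ?_ ?_ ?_
    · exact (MvPolynomial.continuous_eval p).continuousAt
    · refine Continuous.continuousAt ?_
      refine continuous_finset_prod _ fun i _ => ?_
      refine continuous_const.add (continuous_finset_sum _ fun m _ => ?_)
      exact continuous_const.mul (continuous_apply m)
    · exact Finset.prod_ne_zero_iff.mpr fun i _ => hne z hz' i
  · -- the inner circle integral vanishes
    intro y hy
    have hy' : ∀ m, m < l → ‖y m‖ ≤ R m := by
      intro m hm
      have := hy m (ne_of_lt hm)
      simpa using this
    set b : Fin N → ℂ := fun i => cst i + ∑ m ∈ Finset.univ.erase l, a i m * y m with hb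
    have hden : ∀ x : ℂ, ∀ i : Fin N,
        cst i + ∑ m, a i m * Function.update y l x m = b i + a i l * x := by
      intro x i
      rw [hb]
      rw [← Finset.add_sum_erase _ (fun m => a i m * Function.update y l x m)
        (Finset.mem_univ l), Function.update_self,
        show (∑ m ∈ Finset.univ.erase l, a i m * Function.update y l x m) =
            ∑ m ∈ Finset.univ.erase l, a i m * y m from
          Finset.sum_congr rfl fun m hm => by
            rw [Function.update_of_ne (Finset.ne_of_mem_erase hm)]]
      ring
    show (∮ x in C((0 : Fin d → ℂ) l, R l),
        MvPolynomial.eval (Function.update y l x) p /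
          ∏ i, (cst i + ∑ m, a i m * Function.update y l x m)) = 0
    have hfeq : (fun x : ℂ => MvPolynomial.eval (Function.update y l x) p /
          ∏ i, (cst i + ∑ m, a i m * Function.update y l x m)) =
        fun x : ℂ => (∑ s ∈ p.support, MvPolynomial.coeff s p * x ^ s l *
            ∏ m ∈ Finset.univ.erase l, y m ^ s m) / ∏ i, (b i + a i l * x) := by
      funext x
      congr 1
      · rw [MvPolynomial.eval_eq']
        refine Finset.sum_congr rfl fun s hs => ?_
        rw [← Finset.mul_prod_erase _ (fun m => Function.update y l x m ^ s m)
            (Finset.mem_univ l), Function.update_self,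
          show (∏ m ∈ Finset.univ.erase l, Function.update y l x m ^ s m) =
              ∏ m ∈ Finset.univ.erase l, y m ^ s m from
            Finset.prod_congr rfl fun m hm => by
              rw [Function.update_of_ne (Finset.ne_of_mem_erase hm)]]
        ring
      · exact Finset.prod_congr rfl fun i _ => hden x i
    rw [hfeq]
    by_cases hbz : ∃ i, a i l = 0 ∧ b i = 0
    · obtain ⟨i0, hi0, hbi0⟩ := hbz
      have hprodz : ∀ x : ℂ, ∏ i, (b i + a i l * x) = 0 := fun x =>
        Finset.prod_eq_zero (Finset.mem_univ i0) (by rw [hi0, hbi0]; ring)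
      simp only [hprodz, div_zero]
      simp [circleIntegral]
    · push_neg at hbz
      set S := Finset.univ.filter (fun i : Fin N => a i l ≠ 0) with hS
      set D := p.degreeOf l with hD
      set K := ∑ s ∈ p.support, ‖MvPolynomial.coeff s p‖ *
        ∏ m ∈ Finset.univ.erase l, ‖y m‖ ^ s m with hK
      have hK0 : 0 ≤ K := Finset.sum_nonneg fun s _ => by positivity
      set c0 := (∏ i ∈ S, ‖a i l‖ / 2) *
        ∏ i ∈ Finset.univ.filter (fun i : Fin N => ¬a i l ≠ 0), ‖b i‖ with hc0def
      have hc0 : 0 < c0 := by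
        refine mul_pos (Finset.prod_pos fun i hi => ?_) (Finset.prod_pos fun i hi => ?_)
        · have := (Finset.mem_filter.mp hi).2
          have : (0:ℝ) < ‖a i l‖ := norm_pos_iff.mpr this
          linarith
        · have h0 := (Finset.mem_filter.mp hi).2
          push_neg at h0
          exact norm_pos_iff.mpr (hbz i h0)
      have hr0pos : (0:ℝ) < R l / 2 := by have := hR0 l; linarith
      have hr01 : (1:ℝ) ≤ R l / 2 := by have := hR1 l; linarith
      have hfac : ∀ x : ℂ, R l / 2 ≤ ‖x‖ → ∀ i ∈ S,
          ‖a i l‖ / 2 * ‖x‖ ≤ ‖b i + a i l * x‖ := by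
        intro x hx i hiS
        have hail := (Finset.mem_filter.mp hiS).2
        have hbb : ‖b i‖ ≤ ‖a i l‖ * R l / 4 :=
          hkey i l y hail
            (fun m hm => le_of_not_gt fun hlm => hm (hlead i hail m hlm)) hy'
        have h := norm_sub_norm_le (a i l * x) (-(b i))
        rw [sub_neg_eq_add, norm_neg, add_comm (a i l * x) (b i)] at h
        have hnx : ‖a i l * x‖ = ‖a i l‖ * ‖x‖ := norm_mul _ _
        nlinarith [norm_nonneg (a i l), hR0 l]
      have hdennz : ∀ x : ℂ, R l / 2 ≤ ‖x‖ → ∏ i, (b i + a i l * x) ≠ 0 := by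
        intro x hx
        refine Finset.prod_ne_zero_iff.mpr fun i _ => ?_
        by_cases hail : a i l = 0
        · rw [hail, zero_mul, add_zero]; exact hbz i hail
        · have hiS : i ∈ S := Finset.mem_filter.mpr ⟨Finset.mem_univ _, hail⟩
          have h1 := hfac x hx i hiS
          have h2 : (0:ℝ) < ‖a i l‖ / 2 * ‖x‖ := by
            have := norm_pos_iff.mpr hail
            nlinarith
          intro hzero
          rw [hzero, norm_zero] at h1
          linarith
      have hdenlb : ∀ x : ℂ, R l / 2 ≤ ‖x‖ →
          c0 * ‖x‖ ^ S.card ≤ ‖∏ i, (b i + a i l * x)‖ := by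
        intro x hx
        rw [norm_prod]
        rw [← Finset.prod_filter_mul_prod_filter_not Finset.univ (fun i : Fin N => a i l ≠ 0)
          (fun i => ‖b i + a i l * x‖)]
        have hnot : ∏ i ∈ Finset.univ.filter (fun i : Fin N => ¬a i l ≠ 0),
            ‖b i + a i l * x‖ =
            ∏ i ∈ Finset.univ.filter (fun i : Fin N => ¬a i l ≠ 0), ‖b i‖ := by
          refine Finset.prod_congr rfl fun i hi => ?_
          have h0 := (Finset.mem_filter.mp hi).2
          push_neg at h0
          rw [h0, zero_mul, add_zero]
        rw [hnot]
        have hSpart : (∏ i ∈ S, ‖a i l‖ / 2) * ‖x‖ ^ S.card ≤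
            ∏ i ∈ S, ‖b i + a i l * x‖ := by
          have := Finset.prod_le_prod (s := S)
            (f := fun i => ‖a i l‖ / 2 * ‖x‖) (g := fun i => ‖b i + a i l * x‖)
            (fun i _ => by positivity) (fun i hi => hfac x hx i hi)
          calc (∏ i ∈ S, ‖a i l‖ / 2) * ‖x‖ ^ S.card
              = ∏ i ∈ S, (‖a i l‖ / 2 * ‖x‖) := by
                rw [Finset.prod_mul_distrib, Finset.prod_const]
            _ ≤ ∏ i ∈ S, ‖b i + a i l * x‖ := this
        calc c0 * ‖x‖ ^ S.card
            = ((∏ i ∈ S, ‖a i l‖ / 2) * ‖x‖ ^ S.card) *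
              ∏ i ∈ Finset.univ.filter (fun i : Fin N => ¬a i l ≠ 0), ‖b i‖ := by
              rw [hc0def]; ring
          _ ≤ (∏ i ∈ S, ‖b i + a i l * x‖) *
              ∏ i ∈ Finset.univ.filter (fun i : Fin N => ¬a i l ≠ 0), ‖b i‖ := by
              refine mul_le_mul_of_nonneg_right hSpart ?_
              exact Finset.prod_nonneg fun i _ => norm_nonneg _
      have hnum : ∀ x : ℂ, 1 ≤ ‖x‖ →
          ‖∑ s ∈ p.support, MvPolynomial.coeff s p * x ^ s l *
            ∏ m ∈ Finset.univ.erase l, y m ^ s m‖ ≤ K * ‖x‖ ^ D := by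
        intro x h1x
        refine (norm_sum_le _ _).trans ?_
        rw [hK, Finset.sum_mul]
        refine Finset.sum_le_sum fun s hs => ?_
        have hsl : s l ≤ D := by
          rw [hD, MvPolynomial.degreeOf_eq_sup]
          exact Finset.le_sup (f := fun s => s l) hs
        calc ‖MvPolynomial.coeff s p * x ^ s l * ∏ m ∈ Finset.univ.erase l, y m ^ s m‖
            = ‖MvPolynomial.coeff s p‖ * ‖x‖ ^ s l *
              ∏ m ∈ Finset.univ.erase l, ‖y m‖ ^ s m := by
              rw [norm_mul, norm_mul, norm_pow, norm_prod]
              simp [norm_pow]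
          _ ≤ ‖MvPolynomial.coeff s p‖ * ‖x‖ ^ D *
              ∏ m ∈ Finset.univ.erase l, ‖y m‖ ^ s m := by
              have : ‖x‖ ^ s l ≤ ‖x‖ ^ D := pow_le_pow_right₀ h1x hsl
              refine mul_le_mul_of_nonneg_right
                (mul_le_mul_of_nonneg_left this (norm_nonneg _)) ?_
              exact Finset.prod_nonneg fun m _ => by positivity
          _ = ‖MvPolynomial.coeff s p‖ *
              (∏ m ∈ Finset.univ.erase l, ‖y m‖ ^ s m) * ‖x‖ ^ D := by ring
      refine circle_decay_zero (r0 := R l / 2) (M := K / c0) hr0pos (by linarith [hR0 l]) ?_ ?_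
      · intro x hx
        refine DifferentiableAt.div ?_ ?_ (hdennz x hx)
        · refine Differentiable.differentiableAt (Differentiable.fun_sum fun s _ => ?_)
          exact ((differentiable_pow (s l)).const_mul _).mul_const _
        · refine Differentiable.differentiableAt (Differentiable.fun_finset_prod fun i _ => ?_)
          exact (differentiable_const (b i)).add (differentiable_fun_id.const_mul (a i l))
      · intro x hx
        have h1x : (1:ℝ) ≤ ‖x‖ := hr01.trans hx
        have hx0 : (0:ℝ) < ‖x‖ := by linarith
        rw [norm_div]
        have step1 : ‖∑ s ∈ p.support, MvPolynomial.coeff s p * x ^ s l *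
              ∏ m ∈ Finset.univ.erase l, y m ^ s m‖ / ‖∏ i, (b i + a i l * x)‖ ≤
            (K * ‖x‖ ^ D) / (c0 * ‖x‖ ^ S.card) :=
          div_le_div₀ (mul_nonneg hK0 (pow_nonneg (norm_nonneg x) D)) (hnum x h1x)
            (mul_pos hc0 (pow_pos hx0 S.card)) (hdenlb x hx)
        refine step1.trans ?_
        rw [div_le_div_iff₀ (mul_pos hc0 (pow_pos hx0 S.card)) (pow_pos hx0 2)]
        have hpow : ‖x‖ ^ (D + 2) ≤ ‖x‖ ^ S.card := pow_le_pow_right₀ h1x hdeg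
        calc K * ‖x‖ ^ D * ‖x‖ ^ 2 = K * ‖x‖ ^ (D + 2) := by ring
          _ ≤ K * ‖x‖ ^ S.card := mul_le_mul_of_nonneg_left hpow hK0
          _ = K / c0 * (c0 * ‖x‖ ^ S.card) := by field_simp
end
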